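/- The conjugate of the spherical blow-up Ψ_N by the central projection is the Euclidean inversion: Id^{-1} ∘ α_N ∘ Ψ_N ∘ α_N^{-1} ∘ Id equals the map x ↦ −x/‖x‖² on ℝ^{n+1}\{0}. -/

import Mathlib

open scoped RealInnerProductSpace

noncomputable def northPole (n : ℕ) : EuclideanSpace ℝ (Fin (n+2)) :=
  EuclideanSpace.single (Fin.last (n+1)) (1 : ℝ)

noncomputable def sphBlowUp {n : ℕ} (P : EuclideanSpace ℝ (Fin (n+2))) :
    EuclideanSpace ℝ (Fin (n+2)) :=
  (Real.sqrt (1 - ⟪northPole n, P⟫ ^ 2))⁻¹ •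
    (northPole n - ⟪northPole n, P⟫ • P)

/-- `Id(x) = (x,1)`. -/
noncomputable def liftOne {n : ℕ} (x : EuclideanSpace ℝ (Fin (n+1))) :
    EuclideanSpace ℝ (Fin (n+2)) :=
  WithLp.toLp 2 (fun i : Fin (n+2) => if h : (i : ℕ) < n + 1 then x ⟨i, h⟩ else 1)

/-- `Id⁻¹ ∘ α_N` : central projection followed by dropping the last coordinate. -/
noncomputable def centProj {n : ℕ} (Q : EuclideanSpace ℝ (Fin (n+2))) :
    EuclideanSpace ℝ (Fin (n+1)) :=
  WithLp.toLp 2 (fun i => Q i.castSucc / Q (Fin.last (n+1)))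

/-! With `r = ‖(x,1)‖`, the point `P = (x,1)/r` has `N·P = 1/r`, so `Ψ_N P` is a positive multiple
of `N - r⁻²(x,1)`. The central projection ignores that multiple and returns
`-r⁻² x / (1 - r⁻²) = -x / (r² - 1) = -x / ‖x‖²`. -/

section CentralProjection

variable {n : ℕ}

@[simp]
lemma liftOne_castSucc (x : EuclideanSpace ℝ (Fin (n+1))) (i : Fin (n+1)) :
    liftOne x i.castSucc = x i := by
  simp only [liftOne, PiLp.toLp_apply, Fin.val_castSucc, i.isLt, dif_pos]

@[simp]
lemma liftOne_last (x : EuclideanSpace ℝ (Fin (n+1))) : liftOne x (Fin.last (n+1)) = 1 := by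
  simp [liftOne]

lemma norm_liftOne_sq (x : EuclideanSpace ℝ (Fin (n+1))) : ‖liftOne x‖ ^ 2 = ‖x‖ ^ 2 + 1 := by
  simp only [EuclideanSpace.norm_sq_eq, Real.norm_eq_abs, sq_abs, Fin.sum_univ_castSucc,
    liftOne_castSucc, liftOne_last, one_pow]

lemma inner_northPole_liftOne (x : EuclideanSpace ℝ (Fin (n+1))) :
    ⟪northPole n, liftOne x⟫ = 1 := by
  simp [northPole, EuclideanSpace.inner_single_left]

lemma centProj_smul {c : ℝ} (hc : c ≠ 0) (Q : EuclideanSpace ℝ (Fin (n+2))) :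
    centProj (c • Q) = centProj Q := by
  ext i
  simp [centProj, mul_div_mul_left _ _ hc]

lemma centProj_northPole_sub_smul_liftOne (s : ℝ) (x : EuclideanSpace ℝ (Fin (n+1))) :
    centProj (northPole n - s • liftOne x) = -(((1 - s)⁻¹ * s) • x) := by
  ext i
  simp only [centProj, northPole, PiLp.sub_apply, Fin.castSucc_ne_last, PiLp.single_eq_of_ne,
    PiLp.single_eq_same, PiLp.smul_apply, PiLp.neg_apply, liftOne_castSucc, liftOne_last,
    smul_eq_mul, zero_sub, mul_one, ne_eq, not_false_eq_true]
  ring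

end CentralProjection

/-- `Id⁻¹ ∘ α_N ∘ Ψ_N ∘ α_N⁻¹ ∘ Id` is the inversion `x ↦ -x/‖x‖²`. -/
theorem stmt_14 {n : ℕ} (x : EuclideanSpace ℝ (Fin (n+1))) (hx : x ≠ 0) :
    centProj (sphBlowUp (‖liftOne x‖⁻¹ • liftOne x)) = -((‖x‖^2)⁻¹ • x) := by
  set r := ‖liftOne x‖
  have hr : r ^ 2 = ‖x‖ ^ 2 + 1 := norm_liftOne_sq x
  have hheight : 1 - r⁻¹ ^ 2 = ‖x‖ ^ 2 / (‖x‖ ^ 2 + 1) := by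
    rw [inv_pow, hr]; field_simp; ring
  have hscale : (Real.sqrt (1 - r⁻¹ ^ 2))⁻¹ ≠ 0 := by
    rw [hheight]; positivity
  calc centProj (sphBlowUp (r⁻¹ • liftOne x))
      = centProj ((Real.sqrt (1 - r⁻¹ ^ 2))⁻¹ • (northPole n - r⁻¹ ^ 2 • liftOne x)) := by
        simp only [sphBlowUp, inner_smul_right, inner_northPole_liftOne, mul_one, smul_smul, ← sq]
    _ = -(((1 - r⁻¹ ^ 2)⁻¹ * r⁻¹ ^ 2) • x) := by
        rw [centProj_smul hscale, centProj_northPole_sub_smul_liftOne]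
    _ = -((‖x‖ ^ 2)⁻¹ • x) := by
        rw [hheight, inv_pow, hr]; field_simp
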